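/- If R is a Henselian local ring (possibly noncommutative, with R/J(R) a field), then M₂(R) is strongly clean. -/

import Mathlib

/-!
Let `A ∈ M₂(R)` with reduction `Ā ∈ M₂(K)`. Units lift along `M₂(R) → M₂(K)`, so if `Ā` or
`Ā - 1` is invertible then `A = 0 + A` or `A = 1 + (A - 1)`. Otherwise `Ā` has the distinct
eigenvalues `0` and `1`, hence a cyclic vector; lifting it, `A` becomes similar to the companion
matrix of a monic quadratic `f ∈ R[X]` with `f̄ = X (X - 1)`. Hensel's lemma, applied to both
orderings of the factors, gives `f = (X + a)(X + b) = (X + a')(X + b')` with `ā = 0`, `ā' = -1`;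
the columns `(a, 1)` and `(a', 1)` are right eigenvectors of the companion matrix and form a
matrix invertible modulo `J(R)`. So `A` is similar to a diagonal matrix, and diagonal matrices
over a local ring are strongly clean.
-/

open Polynomial

def IsStronglyClean {S : Type*} [Ring S] (a : S) : Prop :=
  ∃ e u : S, IsIdempotentElem e ∧ IsUnit u ∧ a = e + u ∧ e * u = u * e

namespace IsStronglyClean

variable {S T : Type*} [Ring S] [Ring T]

theorem of_isUnit {a : S} (ha : IsUnit a) : IsStronglyClean a :=
  ⟨0, a, .zero, ha, (zero_add a).symm, by simp⟩

theorem of_isUnit_sub_one {a : S} (ha : IsUnit (a - 1)) : IsStronglyClean a :=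
  ⟨1, a - 1, .one, ha, (add_sub_cancel 1 a).symm, by simp⟩

theorem map {a : S} (h : IsStronglyClean a) (f : S →+* T) : IsStronglyClean (f a) := by
  obtain ⟨e, u, he, hu, rfl, heu⟩ := h
  exact ⟨f e, f u, he.map f, hu.map f, map_add f e u, by rw [← map_mul, heu, map_mul]⟩

theorem pi {ι : Type*} {a : ι → S} (h : ∀ i, IsStronglyClean (a i)) : IsStronglyClean a := by
  choose e u he hu hae heu using h
  exact ⟨e, u, funext he, Pi.isUnit_iff.2 hu, funext hae, funext heu⟩

theorem units_conj {a : S} (h : IsStronglyClean a) (u : Sˣ) :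
    IsStronglyClean (u * a * ↑u⁻¹) := by
  simpa [ConjAct.units_smul_def] using
    h.map (MulSemiringAction.toRingHom (ConjAct Sˣ) S (ConjAct.toConjAct u))

theorem of_mul_eq_mul {a b t : S} (ht : IsUnit t) (hab : a * t = t * b)
    (hb : IsStronglyClean b) : IsStronglyClean a := by
  obtain ⟨u, rfl⟩ := ht
  simpa [← hab, mul_assoc] using hb.units_conj u

end IsStronglyClean

theorem IsLocalRing.isStronglyClean {R : Type*} [Ring R] [IsLocalRing R] (a : R) :
    IsStronglyClean a := by
  rcases IsLocalRing.isUnit_or_isUnit_of_add_one (add_sub_cancel a 1) with ha | ha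
  · exact .of_isUnit ha
  · exact .of_isUnit_sub_one (by simpa using ha.neg)

namespace Matrix

theorem isStronglyClean_diagonal {n R : Type*} [Fintype n] [DecidableEq n] [Ring R]
    [IsLocalRing R] (d : n → R) : IsStronglyClean (diagonal d) :=
  (IsStronglyClean.pi fun i => IsLocalRing.isStronglyClean (d i)).map (diagonalRingHom n R)

section Units

variable {R : Type*} [Ring R]

theorem isUnit_upper_unitriangular (b : R) : IsUnit !![1, b; 0, 1] :=
  ⟨⟨_, !![1, -b; 0, 1], by simp [one_fin_two], by simp [one_fin_two]⟩, rfl⟩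

theorem isUnit_lower_unitriangular (c : R) : IsUnit !![1, 0; c, 1] :=
  ⟨⟨_, !![1, 0; -c, 1], by simp [one_fin_two], by simp [one_fin_two]⟩, rfl⟩

theorem isUnit_fin_two_of_isUnit_schur (a : Rˣ) (b c d : R)
    (hs : IsUnit (d - c * ↑a⁻¹ * b)) : IsUnit !![(a : R), b; c, d] := by
  have hdiag : IsUnit (diagonal ![(a : R), d - c * ↑a⁻¹ * b]) :=
    (Pi.isUnit_iff.2 (Fin.forall_fin_two.2 ⟨a.isUnit, hs⟩)).map (diagonalRingHom (Fin 2) R)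
  have hfactor : !![(a : R), b; c, d] =
      !![1, 0; c * ↑a⁻¹, 1] * diagonal ![(a : R), d - c * ↑a⁻¹ * b] * !![1, ↑a⁻¹ * b; 0, 1] := by
    simp [diagonal_fin_two, mul_assoc]
  rw [hfactor]
  exact ((isUnit_lower_unitriangular _).mul hdiag).mul (isUnit_upper_unitriangular _)

variable {K : Type*} [Field K] (π : R →+* K) [IsLocalHom π]

theorem isUnit_fin_two_of_map_ne_zero {a b c d : R} (ha : π a ≠ 0)
    (hdet : π a * π d - π b * π c ≠ 0) : IsUnit !![a, b; c, d] := by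
  obtain ⟨u, rfl⟩ := isUnit_of_map_unit π a (isUnit_iff_ne_zero.2 ha)
  have hs : π (d - c * ↑u⁻¹ * b) = (π u * π d - π b * π c) / π u := by
    rw [map_sub, map_mul, map_mul, map_units_inv]
    field_simp
  refine isUnit_fin_two_of_isUnit_schur u b c d (isUnit_of_map_unit π _ ?_)
  rw [hs, isUnit_iff_ne_zero]
  exact div_ne_zero hdet ha

theorem isUnit_of_isUnit_map {M : Matrix (Fin 2) (Fin 2) R} (h : IsUnit (M.map π)) :
    IsUnit M := by
  have hdet : π (M 0 0) * π (M 1 1) - π (M 0 1) * π (M 1 0) ≠ 0 := by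
    simpa [isUnit_iff_isUnit_det, det_fin_two] using h
  rw [eta_fin_two M]
  by_cases ha : π (M 0 0) = 0
  · have hc : π (M 1 0) ≠ 0 := fun hc => hdet (by simp [ha, hc])
    have hswap : !![M 0 0, M 0 1; M 1 0, M 1 1] =
        !![0, 1; 1, 0] * !![M 1 0, M 1 1; M 0 0, M 0 1] := by
      simp
    rw [hswap]
    refine IsUnit.mul ⟨⟨_, !![0, 1; 1, 0], by simp [one_fin_two], by simp [one_fin_two]⟩, rfl⟩
      (isUnit_fin_two_of_map_ne_zero π hc ?_)
    contrapose! hdet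
    linear_combination -hdet
  · exact isUnit_fin_two_of_map_ne_zero π ha hdet

end Units

section Similarity

def krylov {S : Type*} [Semiring S] (A : Matrix (Fin 2) (Fin 2) S) (v : Fin 2 → S) :
    Matrix (Fin 2) (Fin 2) S :=
  (of ![v, A *ᵥ v])ᵀ

/-- The companion matrix of `X ^ 2 + C p * X + C q`. -/
def companion {S : Type*} [Ring S] (p q : S) : Matrix (Fin 2) (Fin 2) S :=
  !![0, -q; 1, -p]

theorem krylov_map {S T : Type*} [Semiring S] [Semiring T] (A : Matrix (Fin 2) (Fin 2) S)
    (v : Fin 2 → S) (f : S →+* T) : (A.krylov v).map f = (A.map f).krylov (f ∘ v) := by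
  ext i j
  fin_cases j
  · rfl
  · exact RingHom.map_mulVec f A v i

theorem companion_map {S T : Type*} [Ring S] [Ring T] (p q : S) (f : S →+* T) :
    (companion p q).map f = companion (f p) (f q) := by
  ext i j
  fin_cases i <;> fin_cases j <;> simp [companion]

theorem exists_mul_krylov_eq_krylov_mul_companion {S : Type*} [Ring S]
    {A : Matrix (Fin 2) (Fin 2) S} {v : Fin 2 → S} (hP : IsUnit (A.krylov v)) :
    ∃ p q : S, A * A.krylov v = A.krylov v * companion p q := by
  obtain ⟨P, hP⟩ := hP
  set w := (↑P⁻¹ : Matrix (Fin 2) (Fin 2) S) *ᵥ (A *ᵥ A *ᵥ v)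
  have hw : A.krylov v *ᵥ w = A *ᵥ A *ᵥ v := by
    rw [← hP, mulVec_mulVec, P.mul_inv, one_mulVec]
  refine ⟨-w 1, -w 0, ?_⟩
  ext i j
  fin_cases j
  · fin_cases i <;> simp [krylov, companion, mul_apply, Fin.sum_univ_two]
  · simpa [krylov, companion, mul_apply, Fin.sum_univ_two, mulVec, dotProduct] using
      (congrFun hw i).symm

variable {K : Type*} [Field K]

theorem exists_isUnit_krylov {M : Matrix (Fin 2) (Fin 2) K} (h0 : M.det = 0)
    (h1 : (M - 1).det = 0) : ∃ v, IsUnit (M.krylov v) := by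
  obtain ⟨w₀, hw₀, hMw₀⟩ := exists_mulVec_eq_zero_iff.2 h0
  obtain ⟨w₁, hw₁, hMw₁⟩ := exists_mulVec_eq_zero_iff.2 h1
  rw [sub_mulVec, one_mulVec, sub_eq_zero] at hMw₁
  have hMv : M *ᵥ (w₀ + w₁) = w₁ := by rw [mulVec_add, hMw₀, hMw₁, zero_add]
  refine ⟨w₀ + w₁, ?_⟩
  rw [krylov, isUnit_transpose, ← linearIndependent_rows_iff_isUnit, hMv]
  refine LinearIndependent.pair_iff.2 fun s t hst => ?_
  have hsum : (s + t) • w₁ = 0 := by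
    simpa [mulVec_add, mulVec_smul, hMw₀, hMw₁, add_smul] using congrArg (M *ᵥ ·) hst
  have hst' : s + t = 0 := (smul_eq_zero.1 hsum).resolve_right hw₁
  have hs : s = 0 := by
    refine (smul_eq_zero.1 ?_).resolve_right hw₀
    rw [← hst, smul_add, add_assoc, ← add_smul, hst', zero_smul, add_zero]
  exact ⟨hs, by linear_combination hst' - hs⟩

theorem det_eq_of_mul_eq_mul {M N T : Matrix (Fin 2) (Fin 2) K} (hT : IsUnit T)
    (h : M * T = T * N) : M.det = N.det := by
  have hdet := congrArg det h
  rw [det_mul, det_mul, mul_comm] at hdet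
  exact mul_left_cancel₀ ((isUnit_iff_isUnit_det T).1 hT).ne_zero hdet

theorem eq_neg_one_and_eq_zero_of_mul_eq_mul_companion {M T : Matrix (Fin 2) (Fin 2) K}
    {p q : K} (hT : IsUnit T) (h : M * T = T * companion p q) (h0 : M.det = 0)
    (h1 : (M - 1).det = 0) : p = -1 ∧ q = 0 := by
  have h1' : (M - 1) * T = T * (companion p q - 1) := by
    rw [sub_mul, mul_sub, h, one_mul, mul_one]
  have hdet0 : (companion p q).det = q := by simp [companion, det_fin_two]
  have hdet1 : (companion p q - 1).det = 1 + p + q := by simp [companion, det_fin_two]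
  rw [det_eq_of_mul_eq_mul hT h, hdet0] at h0
  rw [det_eq_of_mul_eq_mul hT h1', hdet1] at h1
  exact ⟨by linear_combination h1 - h0, h0⟩

end Similarity

end Matrix

section Hensel

variable {R K : Type*} [Ring R] [Field K]

theorem X_sq_add_C_mul_X_add_C_eq_iff {p q a b : R} :
    X ^ 2 + C p * X + C q = (X + C a) * (X + C b) ↔ p = a + b ∧ q = a * b := by
  have hprod : (X + C a) * (X + C b) = X ^ 2 + C (a + b) * X + C (a * b) := by
    rw [add_mul, mul_add, mul_add, X_mul_C, ← C_mul, C_add, add_mul, sq]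
    abel
  rw [hprod]
  constructor
  · intro h
    exact ⟨by simpa using congrArg (coeff · 1) h, by simpa using congrArg (coeff · 0) h⟩
  · rintro ⟨rfl, rfl⟩
    rfl

theorem Matrix.companion_mul_eq_mul_diagonal {p q a b a' b' : R}
    (h : X ^ 2 + C p * X + C q = (X + C a) * (X + C b))
    (h' : X ^ 2 + C p * X + C q = (X + C a') * (X + C b')) :
    companion p q * !![a, a'; 1, 1] = !![a, a'; 1, 1] * diagonal ![-b, -b'] := by
  obtain ⟨hp, hq⟩ := X_sq_add_C_mul_X_add_C_eq_iff.1 h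
  obtain ⟨hp', hq'⟩ := X_sq_add_C_mul_X_add_C_eq_iff.1 h'
  ext i j
  fin_cases i <;> fin_cases j
  · simp [companion, mul_apply, hq]
  · simp [companion, mul_apply, hq']
  · simp [companion, mul_apply, hp]
  · simp [companion, mul_apply, hp']

def IsHenselian (π : R →+* K) : Prop :=
  ∀ f : R[X], f.Monic → ∀ α β : K[X], α.Monic → β.Monic → IsCoprime α β →
    f.map π = α * β →
    ∃! gh : R[X] × R[X], gh.1.Monic ∧ gh.2.Monic ∧ f = gh.1 * gh.2 ∧
      gh.1.map π = α ∧ gh.2.map π = β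

theorem IsHenselian.exists_eq_X_add_C_mul_X_add_C {π : R →+* K} (hπ : IsHenselian π)
    {f : R[X]} (hf : f.Monic) {r s : K} (hrs : r ≠ s)
    (hfrs : f.map π = (X - C r) * (X - C s)) :
    ∃ a b : R, f = (X + C a) * (X + C b) ∧ π a = -r := by
  obtain ⟨⟨g, h⟩, ⟨hg, hh, rfl, hgr, hhs⟩, -⟩ := hπ f hf _ _ (monic_X_sub_C r) (monic_X_sub_C s)
    (isCoprime_X_sub_C_of_isUnit_sub (sub_ne_zero.2 hrs).isUnit) hfrs
  have hg1 : g = X + C (g.coeff 0) :=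
    hg.eq_X_add_C (by rw [← hg.natDegree_map π, hgr, natDegree_X_sub_C])
  have hh1 : h = X + C (h.coeff 0) :=
    hh.eq_X_add_C (by rw [← hh.natDegree_map π, hhs, natDegree_X_sub_C])
  exact ⟨g.coeff 0, h.coeff 0, by rw [← hg1, ← hh1], by simpa using congrArg (coeff · 0) hgr⟩

theorem IsHenselian.isStronglyClean_companion [IsLocalRing R] {π : R →+* K} [IsLocalHom π]
    (hπ : IsHenselian π) {p q : R} (hp : π p = -1) (hq : π q = 0) :
    IsStronglyClean (Matrix.companion p q) := by
  have hf : (X ^ 2 + C p * X + C q).Monic := by monicity!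
  have hfm : (X ^ 2 + C p * X + C q).map π = (X - C 0) * (X - C 1) := by
    simp [hp, hq, sq, mul_add, sub_eq_add_neg]
  obtain ⟨a, b, hab, ha⟩ := hπ.exists_eq_X_add_C_mul_X_add_C hf zero_ne_one hfm
  obtain ⟨a', b', hab', ha'⟩ :=
    hπ.exists_eq_X_add_C_mul_X_add_C hf one_ne_zero (by rw [hfm, mul_comm])
  have hQ : IsUnit !![a, a'; 1, 1] := Matrix.isUnit_of_isUnit_map π
    (by simp [Matrix.isUnit_iff_isUnit_det, Matrix.det_fin_two, ha, ha'])
  exact (Matrix.isStronglyClean_diagonal ![-b, -b']).of_mul_eq_mul hQ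
    (Matrix.companion_mul_eq_mul_diagonal hab hab')

end Hensel

theorem matrix_two_stronglyClean_of_henselian {R K : Type*} [Ring R] [IsLocalRing R]
    [Field K] (π : R →+* K) (hsurj : Function.Surjective π)
    (hker : ∀ x : R, π x = 0 ↔ ¬ IsUnit x)
    (hensel : ∀ f : R[X], f.Monic → ∀ α β : K[X], α.Monic → β.Monic → IsCoprime α β →
      f.map π = α * β →
      ∃! gh : R[X] × R[X], gh.1.Monic ∧ gh.2.Monic ∧ f = gh.1 * gh.2 ∧
        gh.1.map π = α ∧ gh.2.map π = β) :
    ∀ A : Matrix (Fin 2) (Fin 2) R, IsStronglyClean A := by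
  intro A
  have : IsLocalHom π := ⟨fun x hx => by_contra fun h => hx.ne_zero ((hker x).2 h)⟩
  by_cases h0 : IsUnit (A.map π)
  · exact .of_isUnit (Matrix.isUnit_of_isUnit_map π h0)
  by_cases h1 : IsUnit (A.map π - 1)
  · exact .of_isUnit_sub_one (Matrix.isUnit_of_isUnit_map π (by simpa [Matrix.map_sub] using h1))
  rw [Matrix.isUnit_iff_isUnit_det, isUnit_iff_ne_zero, not_not] at h0 h1
  obtain ⟨v', hv'⟩ := Matrix.exists_isUnit_krylov h0 h1
  obtain ⟨v, rfl⟩ := hsurj.comp_left v'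
  have hP : IsUnit (A.krylov v) := Matrix.isUnit_of_isUnit_map π (by rwa [Matrix.krylov_map])
  obtain ⟨p, q, hApq⟩ := Matrix.exists_mul_krylov_eq_krylov_mul_companion hP
  have hApq' := congrArg (·.map π) hApq
  simp only [Matrix.map_mul, Matrix.krylov_map, Matrix.companion_map] at hApq'
  obtain ⟨hp, hq⟩ := Matrix.eq_neg_one_and_eq_zero_of_mul_eq_mul_companion hv' hApq' h0 h1
  exact (IsHenselian.isStronglyClean_companion hensel hp hq).of_mul_eq_mul hP hApq
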